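/- Let P be a c-regular cd-structure on a category 𝒳 and let 𝒞 be a category. If G : 𝒳^op → 𝒞 is a sheaf for the c-topology τ_P^c, then G sends every distinguished square of P to a pullback square in 𝒞. -/

import Mathlib

open CategoryTheory Limits Opposite

universe w v u

namespace CdFormal

variable {C : Type u} [Category.{v} C] {D : Type w} [Category.{v} D]

/-- A commutative square in `C`: `B → Y`, `B → A`, `p : Y → X`, `i : A → X`. -/
structure CDSquare (C : Type u) [Category.{v} C] where
  B : C
  A : C
  Y : C
  X : C
  e : B ⟶ A
  q : B ⟶ Y
  i : A ⟶ X
  p : Y ⟶ X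
  w : q ≫ p = e ≫ i

/-- The sieve on `X` generated by the feet `{i, p}` of a square. -/
def CDSquare.sieve (Q : CDSquare C) : Sieve Q.X where
  arrows Z g := (∃ h : Z ⟶ Q.A, g = h ≫ Q.i) ∨ (∃ h : Z ⟶ Q.Y, g = h ≫ Q.p)
  downward_closed := by
    rintro Z Z' g (⟨h, rfl⟩ | ⟨h, rfl⟩) g'
    · exact Or.inl ⟨g' ≫ h, by simp⟩
    · exact Or.inr ⟨g' ≫ h, by simp⟩

/-- The c-topology associated to a cd-structure `P`: the coarsest Grothendieck
topology for which the sieve generated by the feet of each distinguished square is covering. -/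
def cTopology (P : Set (CDSquare C)) : GrothendieckTopology C :=
  sInf {J | ∀ Q ∈ P, Q.sieve ∈ J Q.X}

/-- The class of simple `P`-covers. -/
inductive IsSimpleCover (P : Set (CDSquare C)) : (X : C) → Presieve X → Prop
  | iso {X' X : C} (f : X' ⟶ X) (hf : IsIso f) : IsSimpleCover P X (Presieve.singleton f)
  | glue (Q : CDSquare C) (hQ : Q ∈ P) (RY : Presieve Q.Y) (RA : Presieve Q.A)
      (hY : IsSimpleCover P Q.Y RY) (hA : IsSimpleCover P Q.A RA) :
      IsSimpleCover P Q.X (fun Z g =>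
        (∃ h : Z ⟶ Q.Y, RY h ∧ g = h ≫ Q.p) ∨ (∃ h : Z ⟶ Q.A, RA h ∧ g = h ≫ Q.i))

/-- `P` is c-complete: every covering sieve for the associated c-topology contains a
simple `P`-cover. -/
def IsCComplete (P : Set (CDSquare C)) : Prop :=
  ∀ ⦃X : C⦄ (S : Sieve X), S ∈ cTopology P X →
    ∃ R : Presieve X, IsSimpleCover P X R ∧ ∀ ⦃Z⦄ (g : Z ⟶ X), R g → S g

/-- `ρ(X)`: the sheafification of the presheaf represented by `X`. -/
noncomputable def rho (J : GrothendieckTopology C) (X : C) : Sheaf J (Type (max u v)) :=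
  (presheafToSheaf J _).obj (yoneda.obj X ⋙ uliftFunctor.{u})

/-- Functoriality of `ρ`. -/
noncomputable def rhoMap (J : GrothendieckTopology C) {X Y : C} (f : X ⟶ Y) :
    rho J X ⟶ rho J Y :=
  (presheafToSheaf J _).map (Functor.whiskerRight (yoneda.map f) uliftFunctor.{u})

lemma rhoMap_comp (J : GrothendieckTopology C) {X Y Z : C} (f : X ⟶ Y) (g : Y ⟶ Z) :
    rhoMap J (f ≫ g) = rhoMap J f ≫ rhoMap J g := by
  unfold rhoMap
  rw [Functor.map_comp, Functor.whiskerRight_comp]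
  exact Functor.map_comp _ _ _

/-- The canonical comparison morphism
`ρ(Y) ⊔ (ρ(B) ×_{ρ(A)} ρ(B)) ⟶ ρ(Y) ×_{ρ(X)} ρ(Y)` associated to a square. -/
instance sheafTypeHasBinaryCoproducts (J : GrothendieckTopology C) :
    HasColimitsOfShape (Discrete WalkingPair) (Sheaf J (Type (max u v))) :=
  haveI : HasWeakSheafify J (Type (max u v)) := inferInstance
  haveI : HasColimitsOfShape (Discrete WalkingPair) (Type (max u v)) := inferInstance
  Sheaf.instHasColimitsOfShape

noncomputable def regCompare (J : GrothendieckTopology C) (Q : CDSquare C) :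
    (rho J Q.Y) ⨿ (pullback (rhoMap J Q.e) (rhoMap J Q.e)) ⟶
      pullback (rhoMap J Q.p) (rhoMap J Q.p) :=
  coprod.desc (pullback.lift (𝟙 _) (𝟙 _) rfl)
    (pullback.lift (pullback.fst _ _ ≫ rhoMap J Q.q) (pullback.snd _ _ ≫ rhoMap J Q.q)
      (by
        rw [Category.assoc, Category.assoc, ← rhoMap_comp, Q.w, rhoMap_comp,
          ← Category.assoc, ← Category.assoc, pullback.condition]))

/-- `P` is c-regular. -/
def IsCRegular (P : Set (CDSquare C)) : Prop :=
  ∀ Q ∈ P, IsPullback Q.q Q.e Q.p Q.i ∧ Mono Q.i ∧ Epi (regCompare (cTopology P) Q)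

/-- The image of a square under a functor. -/
@[simps]
def CDSquare.map (F : C ⥤ D) (Q : CDSquare C) : CDSquare D where
  B := F.obj Q.B
  A := F.obj Q.A
  Y := F.obj Q.Y
  X := F.obj Q.X
  e := F.map Q.e
  q := F.map Q.q
  i := F.map Q.i
  p := F.map Q.p
  w := by rw [← F.map_comp, ← F.map_comp, Q.w]

/-- The induced cd-structure on a slice category. -/
def sliceCd (P : Set (CDSquare C)) (X : C) : Set (CDSquare (Over X)) :=
  {Q | Q.map (Over.forget X) ∈ P}

/-- A dimension function on a category: an initial object `empty` together with a
dimension taking the minimal value `bot` exactly on objects isomorphic to `empty`. -/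
structure DimensionFunction (C : Type u) [Category.{v} C] (Λ : Type w) [Preorder Λ] where
  empty : C
  init : Nonempty (IsInitial empty)
  dim : C → Λ
  bot : Λ
  bot_le : ∀ X : C, bot ≤ dim X
  dim_eq_bot_iff : ∀ X : C, dim X = bot ↔ Nonempty (X ≅ empty)

/-- A cd-structure is compatible with a dimension function. -/
def CompatibleWithDim {Λ : Type w} [Preorder Λ] (P : Set (CDSquare C))
    (Dm : DimensionFunction C Λ) : Prop :=
  ∃ P' : Set (CDSquare C), P' ⊆ P ∧
    (∀ Q ∈ P', Dm.dim Q.A ≤ Dm.dim Q.X ∧ Dm.dim Q.Y ≤ Dm.dim Q.X ∧ Dm.dim Q.B < Dm.dim Q.X) ∧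
    ∀ Q ∈ P, ∃ R : Presieve Q.X, IsSimpleCover P' Q.X R ∧
      ∀ ⦃Z⦄ (g : Z ⟶ Q.X), R g → Q.sieve g

end CdFormal


/-!
A sheaf `G` glues along the covering sieve generated by `i` and `p`, so it suffices to check that
a pair `a : E ⟶ G(A)`, `y : E ⟶ G(Y)` agreeing over `B` is a compatible family on `{i, p}`.
Two maps into `A` with the same composite with `i` are equal, since `i` is mono; a map into `A`
and one into `Y` with the same composite to `X` factor through `B`, since the square is cartesian.
The remaining case, two maps `k, k' : W ⟶ Y` with `k ≫ p = k' ≫ p`, is where c-regularity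
enters: the pair `(ρ k, ρ k')` is a section of `ρ(Y) ×_{ρ(X)} ρ(Y)`, which locally lifts along
the epimorphism from `ρ(Y) ⊔ (ρ(B) ×_{ρ(A)} ρ(B))`. Hence `W` is covered by maps `f` such that
either `f ≫ k = f ≫ k'`, or `f ≫ k` and `f ≫ k'` factor through `q` via maps `b, b'` with
`b ≫ e = b' ≫ e`; in both cases `y` restricts equally along `f ≫ k` and `f ≫ k'`.
-/

namespace CdFormal

variable {C : Type u} [Category.{v} C]

lemma sieve_mem_cTopology {P : Set (CDSquare C)} {Q : CDSquare C} (hQ : Q ∈ P) :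
    Q.sieve ∈ cTopology P Q.X := by
  rw [cTopology, GrothendieckTopology.mem_sInf]
  exact fun _ hJ ↦ hJ Q hQ

namespace CDSquare

lemma sieve_eq_ofTwoArrows (Q : CDSquare C) : Q.sieve = Sieve.ofTwoArrows Q.i Q.p := by
  ext Z g
  constructor
  · rintro (⟨h, rfl⟩ | ⟨h, rfl⟩)
    · exact ⟨_, h, _, ⟨WalkingPair.left⟩, rfl⟩
    · exact ⟨_, h, _, ⟨WalkingPair.right⟩, rfl⟩
  · rintro ⟨_, h, _, ⟨_ | _⟩, rfl⟩
    · exact Or.inl ⟨h, rfl⟩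
    · exact Or.inr ⟨h, rfl⟩

def glueSieve (Q : CDSquare C) {W : C} (k k' : W ⟶ Q.Y) : Sieve W where
  arrows _ f := (∃ b b' : _ ⟶ Q.B, b ≫ Q.q = f ≫ k ∧ b' ≫ Q.q = f ≫ k' ∧ b ≫ Q.e = b' ≫ Q.e) ∨
    f ≫ k = f ≫ k'
  downward_closed := by
    rintro _ _ f (⟨b, b', hb, hb', he⟩ | hf) g
    · exact Or.inl ⟨g ≫ b, g ≫ b', by simp [hb], by simp [hb'], by simp [he]⟩
    · exact Or.inr (by simp [hf])

variable {A : Type w} [Category.{v'} A] {J : GrothendieckTopology C} {G : Cᵒᵖ ⥤ A}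

lemma map_eq_map_of_glueSieve_mem (hG : Presheaf.IsSheaf J G) (Q : CDSquare C) {W : C}
    {k k' : W ⟶ Q.Y} (hS : Q.glueSieve k k' ∈ J W) {E : A} {a : E ⟶ G.obj (op Q.A)}
    {y : E ⟶ G.obj (op Q.Y)} (hay : a ≫ G.map Q.e.op = y ≫ G.map Q.q.op) :
    y ≫ G.map k.op = y ≫ G.map k'.op := by
  refine hG.hom_ext ⟨_, hS⟩ _ _ ?_
  rintro ⟨V, f, ⟨b, b', hb, hb', he⟩ | hf⟩
  · calc (y ≫ G.map k.op) ≫ G.map f.op = (y ≫ G.map Q.q.op) ≫ G.map b.op := by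
          simp only [Category.assoc, ← G.map_comp, ← op_comp, hb]
      _ = (y ≫ G.map Q.q.op) ≫ G.map b'.op := by
          simp only [← hay, Category.assoc, ← G.map_comp, ← op_comp, he]
      _ = (y ≫ G.map k'.op) ≫ G.map f.op := by
          simp only [Category.assoc, ← G.map_comp, ← op_comp, hb']
  · simp only [Category.assoc, ← G.map_comp, ← op_comp, hf]

lemma map_eq_map_of_isPullback {Q : CDSquare C} (hpb : IsPullback Q.q Q.e Q.p Q.i) {E : A}
    {a : E ⟶ G.obj (op Q.A)} {y : E ⟶ G.obj (op Q.Y)} (hay : a ≫ G.map Q.e.op = y ≫ G.map Q.q.op)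
    {W : C} {g : W ⟶ Q.A} {k : W ⟶ Q.Y} (h : g ≫ Q.i = k ≫ Q.p) :
    a ≫ G.map g.op = y ≫ G.map k.op := by
  obtain ⟨φ, rfl, rfl⟩ : ∃ φ, φ ≫ Q.e = g ∧ φ ≫ Q.q = k :=
    ⟨hpb.lift k g h.symm, hpb.lift_snd _ _ _, hpb.lift_fst _ _ _⟩
  rw [op_comp, op_comp, G.map_comp, G.map_comp, reassoc_of% hay]

lemma isPullback_map_of_isSheaf (hG : Presheaf.IsSheaf J G) {Q : CDSquare C}
    (hpb : IsPullback Q.q Q.e Q.p Q.i) [Mono Q.i] (hcov : Q.sieve ∈ J Q.X)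
    (hglue : ∀ ⦃W⦄ (k k' : W ⟶ Q.Y), k ≫ Q.p = k' ≫ Q.p → Q.glueSieve k k' ∈ J W) :
    IsPullback (G.map Q.i.op) (G.map Q.p.op) (G.map Q.e.op) (G.map Q.q.op) := by
  rw [sieve_eq_ofTwoArrows] at hcov
  have w : G.map Q.i.op ≫ G.map Q.e.op = G.map Q.p.op ≫ G.map Q.q.op := by
    simp only [← G.map_comp, ← op_comp, Q.w]
  refine IsPullback.of_isLimit (PullbackCone.IsLimit.mk w
    (fun s ↦ hG.amalgamateOfArrows _ hcov (fun j ↦ WalkingPair.casesOn j s.fst s.snd) ?_)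
    (fun s ↦ hG.amalgamateOfArrows_map _ _ _ _ WalkingPair.left)
    (fun s ↦ hG.amalgamateOfArrows_map _ _ _ _ WalkingPair.right)
    (fun s m hm₁ hm₂ ↦ hG.hom_ext_ofArrows _ hcov ?_))
  · rintro W (_ | _) (_ | _) a b fac
    · obtain rfl : a = b := (cancel_mono Q.i).1 fac
      rfl
    · exact map_eq_map_of_isPullback hpb s.condition fac
    · exact (map_eq_map_of_isPullback hpb s.condition fac.symm).symm
    · exact map_eq_map_of_glueSieve_mem hG Q (hglue a b fac) s.condition
  · rintro (_ | _)
    · rw [hG.amalgamateOfArrows_map _ _ _ _ WalkingPair.left]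
      exact hm₁
    · rw [hG.amalgamateOfArrows_map _ _ _ _ WalkingPair.right]
      exact hm₂

end CDSquare

variable {J : GrothendieckTopology C}

lemma imageSieve_inl_sup_imageSieve_inr_mem [HasSheafify J (Type w)]
    {S₁ S₂ T : Sheaf J (Type w)} [HasBinaryCoproduct S₁ S₂] (φ : S₁ ⨿ S₂ ⟶ T) [Epi φ] {U : C}
    (t : T.obj.obj (op U)) :
    Presheaf.imageSieve (coprod.inl ≫ φ).hom t ⊔ Presheaf.imageSieve (coprod.inr ≫ φ).hom t ∈
      J U := by
  -- A section of `S₁ ⨿ S₂` is only locally in one summand, so rather than computing sections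
  -- of the coproduct we show that the subsheaf generated by the two images is everything.
  let R := (Subfunctor.range (coprod.inl ≫ φ).hom ⊔
    Subfunctor.range (coprod.inr ≫ φ).hom).sheafify J
  let T' : Sheaf J (Type w) := ⟨R.toFunctor, (isSheaf_iff_isSheaf_of_type _ _).2
      (Subfunctor.sheafify_isSheaf _ ((isSheaf_iff_isSheaf_of_type _ _).1 T.2))⟩
  let ι : T' ⟶ T := ⟨R.ι⟩
  let α : S₁ ⟶ T' := ⟨Subfunctor.lift _ (le_sup_left.trans (Subfunctor.le_sheafify _ _))⟩
  let β : S₂ ⟶ T' := ⟨Subfunctor.lift _ (le_sup_right.trans (Subfunctor.le_sheafify _ _))⟩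
  have : Epi ι := epi_of_epi_fac (f := coprod.desc α β) (h := φ) <| by
    ext1 <;> simp only [coprod.inl_desc_assoc, coprod.inr_desc_assoc] <;> rfl
  have : Sheaf.IsLocallySurjective ι := (Sheaf.isLocallySurjective_iff_epi ι).2 this
  refine J.transitive (Presheaf.imageSieve_mem J ι.hom t) _ ?_
  rintro V f ⟨⟨s, hs⟩, rfl⟩
  refine J.superset_covering ?_ hs
  rintro V' g (⟨x, hx⟩ | ⟨x, hx⟩)
  · exact Or.inl ⟨x, hx.trans (by simp)⟩
  · exact Or.inr ⟨x, hx.trans (by simp)⟩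

lemma Sheaf.app_app_of_comp_eq {F G H : Sheaf J (Type w)} {f : F ⟶ G} {g : G ⟶ H} {h : F ⟶ H}
    (hfg : f ≫ g = h) {U : Cᵒᵖ} (x : F.obj.obj U) :
    g.hom.app U (f.hom.app U x) = h.hom.app U x := by
  subst hfg
  rfl

section

variable (J)

noncomputable def rhoMk {V Z : C} (m : V ⟶ Z) : (rho J Z).obj.obj (op V) :=
  (toSheafify J (yoneda.obj Z ⋙ uliftFunctor.{u})).app (op V) ⟨m⟩

end

lemma rho_map_rhoMk {V' V Z : C} (g : V' ⟶ V) (m : V ⟶ Z) :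
    (rho J Z).obj.map g.op (rhoMk J m) = rhoMk J (g ≫ m) :=
  (types_congr_hom ((toSheafify J (yoneda.obj Z ⋙ uliftFunctor.{u})).naturality g.op)
    (ULift.up m)).symm

lemma rhoMap_app_rhoMk {V Z Z' : C} (m : V ⟶ Z) (f : Z ⟶ Z') :
    (rhoMap J f).hom.app (op V) (rhoMk J m) = rhoMk J (m ≫ f) :=
  (types_congr_hom (congr_app (toSheafify_naturality J
    (Functor.whiskerRight (yoneda.map f) uliftFunctor.{u})) (op V)) (ULift.up m)).symm

lemma map_app_rhoMk_id {W V : C} {T : Sheaf J (Type (max u v))} (L : rho J W ⟶ T) (f : V ⟶ W) :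
    T.obj.map f.op (L.hom.app (op W) (rhoMk J (𝟙 W))) = L.hom.app (op V) (rhoMk J f) := by
  rw [← NatTrans.naturality_apply, rho_map_rhoMk, Category.comp_id]

lemma exists_covering_of_rhoMk_eq {V Z : C} {m m' : V ⟶ Z} (h : rhoMk J m = rhoMk J m') :
    ∃ S ∈ J V, ∀ ⦃V'⦄ (g : V' ⟶ V), S g → g ≫ m = g ≫ m' :=
  ⟨Presheaf.equalizerSieve (F := yoneda.obj Z ⋙ uliftFunctor.{u}) (X := op V) ⟨m⟩ ⟨m'⟩,
    Presheaf.equalizerSieve_mem J (toSheafify J _) _ _ h,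
    fun _ _ hg ↦ congrArg ULift.down hg⟩

section

variable (J)

lemma inl_regCompare_fst (Q : CDSquare C) :
    (coprod.inl ≫ regCompare J Q) ≫ pullback.fst _ _ = 𝟙 _ := by
  rw [regCompare, coprod.inl_desc, pullback.lift_fst]

lemma inl_regCompare_snd (Q : CDSquare C) :
    (coprod.inl ≫ regCompare J Q) ≫ pullback.snd _ _ = 𝟙 _ := by
  rw [regCompare, coprod.inl_desc, pullback.lift_snd]

lemma inr_regCompare_fst (Q : CDSquare C) :
    (coprod.inr ≫ regCompare J Q) ≫ pullback.fst _ _ = pullback.fst _ _ ≫ rhoMap J Q.q := by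
  rw [regCompare, coprod.inr_desc, pullback.lift_fst]

lemma inr_regCompare_snd (Q : CDSquare C) :
    (coprod.inr ≫ regCompare J Q) ≫ pullback.snd _ _ = pullback.snd _ _ ≫ rhoMap J Q.q := by
  rw [regCompare, coprod.inr_desc, pullback.lift_snd]

end

lemma glueSieve_pullback_mem_of_rhoMk_eq (Q : CDSquare C) {W V : C} {k k' : W ⟶ Q.Y}
    {f : V ⟶ W} (h : rhoMk J (f ≫ k) = rhoMk J (f ≫ k')) :
    (Q.glueSieve k k').pullback f ∈ J V := by
  obtain ⟨S, hS, hSeq⟩ := exists_covering_of_rhoMk_eq h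
  exact J.superset_covering (fun _ g hg ↦ Or.inr (by simpa using hSeq g hg)) hS

lemma glueSieve_pullback_mem_of_rhoMk (Q : CDSquare C) {W V : C} {k k' : W ⟶ Q.Y}
    {f : V ⟶ W} {b b' : V ⟶ Q.B} (hb : rhoMk J (b ≫ Q.q) = rhoMk J (f ≫ k))
    (hb' : rhoMk J (b' ≫ Q.q) = rhoMk J (f ≫ k'))
    (he : rhoMk J (b ≫ Q.e) = rhoMk J (b' ≫ Q.e)) :
    (Q.glueSieve k k').pullback f ∈ J V := by
  obtain ⟨S₁, hS₁, h₁⟩ := exists_covering_of_rhoMk_eq hb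
  obtain ⟨S₂, hS₂, h₂⟩ := exists_covering_of_rhoMk_eq hb'
  obtain ⟨S₃, hS₃, h₃⟩ := exists_covering_of_rhoMk_eq he
  refine J.superset_covering ?_ (J.intersection_covering (J.intersection_covering hS₁ hS₂) hS₃)
  rintro V' g ⟨⟨hg₁, hg₂⟩, hg₃⟩
  exact Or.inl ⟨g ≫ b, g ≫ b', by simpa using h₁ g hg₁, by simpa using h₂ g hg₂,
    by simpa using h₃ g hg₃⟩

lemma glueSieve_pullback_mem_of_rho (Q : CDSquare C) {W V : C} {k k' : W ⟶ Q.Y}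
    {f : V ⟶ W} (b b' : (rho J Q.B).obj.obj (op V))
    (hb : (rhoMap J Q.q).hom.app _ b = rhoMk J (f ≫ k))
    (hb' : (rhoMap J Q.q).hom.app _ b' = rhoMk J (f ≫ k'))
    (he : (rhoMap J Q.e).hom.app _ b = (rhoMap J Q.e).hom.app _ b') :
    (Q.glueSieve k k').pullback f ∈ J V := by
  refine J.transitive (J.intersection_covering
    (Presheaf.imageSieve_mem J (toSheafify J (yoneda.obj Q.B ⋙ uliftFunctor.{u})) b)
    (Presheaf.imageSieve_mem J (toSheafify J (yoneda.obj Q.B ⋙ uliftFunctor.{u})) b')) _ ?_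
  rintro V' g ⟨⟨⟨m⟩, hm⟩, ⟨⟨m'⟩, hm'⟩⟩
  change rhoMk J m = (rho J Q.B).obj.map g.op b at hm
  change rhoMk J m' = (rho J Q.B).obj.map g.op b' at hm'
  rw [← Sieve.pullback_comp]
  apply glueSieve_pullback_mem_of_rhoMk Q (b := m) (b' := m')
  · rw [← rhoMap_app_rhoMk, hm, NatTrans.naturality_apply, hb, rho_map_rhoMk, Category.assoc]
  · rw [← rhoMap_app_rhoMk, hm', NatTrans.naturality_apply, hb', rho_map_rhoMk, Category.assoc]
  · rw [← rhoMap_app_rhoMk, ← rhoMap_app_rhoMk, hm, hm', NatTrans.naturality_apply,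
      NatTrans.naturality_apply, he]

lemma glueSieve_mem_of_epi_regCompare (Q : CDSquare C) [Epi (regCompare J Q)] {W : C}
    {k k' : W ⟶ Q.Y} (hk : k ≫ Q.p = k' ≫ Q.p) : Q.glueSieve k k' ∈ J W := by
  let L : rho J W ⟶ pullback (rhoMap J Q.p) (rhoMap J Q.p) :=
    pullback.lift (rhoMap J k) (rhoMap J k') (by rw [← rhoMap_comp, ← rhoMap_comp, hk])
  have hL₁ {V : C} (f : V ⟶ W) :
      (pullback.fst (rhoMap J Q.p) (rhoMap J Q.p)).hom.app _ (L.hom.app _ (rhoMk J f)) =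
        rhoMk J (f ≫ k) :=
    (Sheaf.app_app_of_comp_eq (pullback.lift_fst _ _ _) _).trans (rhoMap_app_rhoMk f k)
  have hL₂ {V : C} (f : V ⟶ W) :
      (pullback.snd (rhoMap J Q.p) (rhoMap J Q.p)).hom.app _ (L.hom.app _ (rhoMk J f)) =
        rhoMk J (f ≫ k') :=
    (Sheaf.app_app_of_comp_eq (pullback.lift_snd _ _ _) _).trans (rhoMap_app_rhoMk f k')
  refine J.transitive (imageSieve_inl_sup_imageSieve_inr_mem (regCompare J Q)
    (L.hom.app _ (rhoMk J (𝟙 W)))) _ ?_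
  rintro V f (⟨s, hs⟩ | ⟨s, hs⟩) <;> rw [map_app_rhoMk_id] at hs
  · apply glueSieve_pullback_mem_of_rhoMk_eq Q
    rw [← hL₁, ← hL₂, ← hs, Sheaf.app_app_of_comp_eq (inl_regCompare_fst J Q),
      Sheaf.app_app_of_comp_eq (inl_regCompare_snd J Q)]
  · refine glueSieve_pullback_mem_of_rho Q
      ((pullback.fst (rhoMap J Q.e) (rhoMap J Q.e)).hom.app _ s)
      ((pullback.snd (rhoMap J Q.e) (rhoMap J Q.e)).hom.app _ s) ?_ ?_ ?_
    · rw [← hL₁, ← hs, Sheaf.app_app_of_comp_eq (inr_regCompare_fst J Q)]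
      rfl
    · rw [← hL₂, ← hs, Sheaf.app_app_of_comp_eq (inr_regCompare_snd J Q)]
      rfl
    · exact Sheaf.app_app_of_comp_eq pullback.condition s

/-- If `P` is a c-regular cd-structure on `C` and `G : Cᵒᵖ ⥤ A` is a sheaf for the
associated c-topology, then `G` sends every distinguished square of `P` to a pullback
square in `A`. -/
theorem sends_distinguished_to_pullback_of_isSheaf
    {C : Type u} [Category.{v} C] {A : Type w} [Category.{v'} A]
    (P : Set (CDSquare C)) (hP : IsCRegular P) (G : Cᵒᵖ ⥤ A)
    (hG : Presheaf.IsSheaf (cTopology P) G) :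
    ∀ Q ∈ P,
      IsPullback (G.map Q.i.op) (G.map Q.p.op) (G.map Q.e.op) (G.map Q.q.op) := by
  intro Q hQ
  obtain ⟨hpb, _, _⟩ := hP Q hQ
  exact CDSquare.isPullback_map_of_isSheaf hG hpb (sieve_mem_cTopology hQ)
    fun _ _ _ hk ↦ glueSieve_mem_of_epi_regCompare Q hk

end CdFormal
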